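/- For every feature i ∈ Fin m, the following are equivalent: (a) i is irrelevant, i.e., i belongs to no AXp; (b) Sv(cf_a, i) = 0; (c) Sv(cf_c, i) = 0; (d) Sv(cf_n, i) = 0. -/
import Mathlib


open scoped Classical

noncomputable section

/-- The set of points of feature space agreeing with `v` on the features in `S`. -/
def Upsilon {m : ℕ} (D : Fin m → Type) [∀ i, Fintype (D i)] (v : ∀ i, D i)
    (S : Finset (Fin m)) : Finset (∀ i, D i) :=
  Finset.univ.filter (fun x => ∀ i ∈ S, x i = v i)

/-- The similarity characteristic function. -/
def cf_s {m : ℕ} (D : Fin m → Type) [∀ i, Fintype (D i)] (v : ∀ i, D i)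
    (σ : (∀ i, D i) → Prop) (S : Finset (Fin m)) : ℝ :=
  (1 / (Upsilon D v S).card) * ∑ x ∈ Upsilon D v S, (if σ x then (1 : ℝ) else 0)

/-- The WAXp-based characteristic function. -/
def cf_a {m : ℕ} (D : Fin m → Type) [∀ i, Fintype (D i)] (v : ∀ i, D i)
    (σ : (∀ i, D i) → Prop) (S : Finset (Fin m)) : ℝ :=
  if cf_s D v σ S = 1 then 1 else 0

/-- The complement of the WAXp-based characteristic function. -/
def cf_n {m : ℕ} (D : Fin m → Type) [∀ i, Fintype (D i)] (v : ∀ i, D i)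
    (σ : (∀ i, D i) → Prop) (S : Finset (Fin m)) : ℝ :=
  if cf_s D v σ S < 1 then 1 else 0

/-- The WCXp-based characteristic function. -/
def cf_c {m : ℕ} (D : Fin m → Type) [∀ i, Fintype (D i)] (v : ∀ i, D i)
    (σ : (∀ i, D i) → Prop) (S : Finset (Fin m)) : ℝ :=
  if cf_s D v σ (Finset.univ \ S) < 1 then 1 else 0

/-- Weak abductive explanation. -/
def WAXp {m : ℕ} (D : Fin m → Type) [∀ i, Fintype (D i)] (v : ∀ i, D i)
    (σ : (∀ i, D i) → Prop) (S : Finset (Fin m)) : Prop :=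
  ∀ x ∈ Upsilon D v S, σ x

/-- Weak contrastive explanation. -/
def WCXp {m : ℕ} (D : Fin m → Type) (v : ∀ i, D i)
    (σ : (∀ i, D i) → Prop) (S : Finset (Fin m)) : Prop :=
  ∃ x : ∀ i, D i, (∀ i ∉ S, x i = v i) ∧ ¬ σ x

/-- The Shapley value of feature `i` for characteristic function `ν`. -/
def Sv {m : ℕ} (ν : Finset (Fin m) → ℝ) (i : Fin m) : ℝ :=
  ∑ S ∈ (Finset.univ \ ({i} : Finset (Fin m))).powerset,
    ((Nat.factorial S.card * Nat.factorial (m - S.card - 1) : ℝ) / (Nat.factorial m : ℝ)) *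
      (ν (insert i S) - ν S)

section AuxLemmas
variable {m : ℕ} (D : Fin m → Type) [∀ i, Fintype (D i)] (v : ∀ i, D i)
  (σ : (∀ i, D i) → Prop)

lemma mem_upsilon_self (S : Finset (Fin m)) : v ∈ Upsilon D v S := by
  simp [Upsilon]

lemma cf_s_eq_one_iff (S : Finset (Fin m)) :
    cf_s D v σ S = 1 ↔ WAXp D v σ S := by
  have hpos : 0 < (Upsilon D v S).card :=
    Finset.card_pos.2 ⟨v, mem_upsilon_self D v S⟩
  have hc : (0:ℝ) < ((Upsilon D v S).card : ℝ) := by exact_mod_cast hpos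
  unfold cf_s WAXp
  rw [Finset.sum_boole, one_div, inv_mul_eq_div, div_eq_one_iff_eq (ne_of_gt hc)]
  rw [Nat.cast_inj]
  constructor
  · intro h x hx
    have hsub : (Upsilon D v S).filter σ ⊆ Upsilon D v S := Finset.filter_subset _ _
    have := Finset.eq_of_subset_of_card_le hsub (le_of_eq h.symm)
    rw [← this] at hx
    exact (Finset.mem_filter.1 hx).2
  · intro h
    rw [Finset.filter_eq_self.2 h]

lemma cf_s_le_one (S : Finset (Fin m)) : cf_s D v σ S ≤ 1 := by
  have hpos : 0 < (Upsilon D v S).card :=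
    Finset.card_pos.2 ⟨v, mem_upsilon_self D v S⟩
  have hc : (0:ℝ) < ((Upsilon D v S).card : ℝ) := by exact_mod_cast hpos
  unfold cf_s
  rw [Finset.sum_boole, one_div, inv_mul_eq_div, div_le_one hc]
  exact_mod_cast Finset.card_filter_le _ _

lemma waxp_mono {S T : Finset (Fin m)} (h : S ⊆ T) (hS : WAXp D v σ S) :
    WAXp D v σ T := by
  intro x hx
  apply hS
  simp only [Upsilon, Finset.mem_filter, Finset.mem_univ, true_and] at hx ⊢
  exact fun j hj => hx j (h hj)

lemma cf_a_eq (S : Finset (Fin m)) :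
    cf_a D v σ S = if WAXp D v σ S then 1 else 0 := by
  unfold cf_a
  simp [cf_s_eq_one_iff]

lemma cf_n_eq (S : Finset (Fin m)) :
    cf_n D v σ S = 1 - cf_a D v σ S := by
  unfold cf_n cf_a
  rcases lt_or_eq_of_le (cf_s_le_one D v σ S) with h | h
  · rw [if_pos h, if_neg (ne_of_lt h)]; ring
  · rw [if_neg (not_lt_of_ge (le_of_eq h.symm)), if_pos h]; ring

lemma cf_c_eq (S : Finset (Fin m)) :
    cf_c D v σ S = 1 - cf_a D v σ (Finset.univ \ S) := by
  rw [← cf_n_eq]; rfl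

lemma cf_a_mono {S T : Finset (Fin m)} (h : S ⊆ T) :
    cf_a D v σ S ≤ cf_a D v σ T := by
  rw [cf_a_eq, cf_a_eq]
  by_cases hS : WAXp D v σ S
  · rw [if_pos hS, if_pos (waxp_mono D v σ h hS)]
  · rw [if_neg hS]
    positivity

lemma cf_a_eq_iff (S T : Finset (Fin m)) :
    cf_a D v σ S = cf_a D v σ T ↔ (WAXp D v σ S ↔ WAXp D v σ T) := by
  rw [cf_a_eq, cf_a_eq]
  by_cases hS : WAXp D v σ S <;> by_cases hT : WAXp D v σ T <;>
    simp [hS, hT]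

lemma exists_min_waxp {Z : Finset (Fin m)} (h : WAXp D v σ Z) :
    ∃ X ⊆ Z, WAXp D v σ X ∧ ∀ Y ⊂ X, ¬ WAXp D v σ Y := by
  have hne : (Z.powerset.filter (WAXp D v σ)).Nonempty :=
    ⟨Z, by simp [h]⟩
  obtain ⟨X, hX, hmin⟩ := Finset.exists_min_image _ Finset.card hne
  simp only [Finset.mem_filter, Finset.mem_powerset] at hX
  refine ⟨X, hX.1, hX.2, fun Y hY hWY => ?_⟩
  have hYm : Y ∈ Z.powerset.filter (WAXp D v σ) := by
    simp only [Finset.mem_filter, Finset.mem_powerset]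
    exact ⟨hY.subset.trans hX.1, hWY⟩
  exact absurd (hmin Y hYm) (not_le_of_gt (Finset.card_lt_card hY))

/-- Irrelevance characterization. -/
lemma irrelevant_iff (i : Fin m) :
    (¬ ∃ X : Finset (Fin m),
        (WAXp D v σ X ∧ ∀ Y ⊂ X, ¬ WAXp D v σ Y) ∧ i ∈ X) ↔
      ∀ S : Finset (Fin m), i ∉ S →
        (WAXp D v σ (insert i S) ↔ WAXp D v σ S) := by
  constructor
  · intro h S hiS
    constructor
    · intro hins
      by_contra hS
      obtain ⟨X, hXsub, hWX, hminX⟩ := exists_min_waxp D v σ hins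
      apply h
      refine ⟨X, ⟨hWX, hminX⟩, ?_⟩
      by_contra hiX
      have : X ⊆ S := fun j hj => by
        rcases Finset.mem_insert.1 (hXsub hj) with rfl | hjS
        · exact absurd hj hiX
        · exact hjS
      exact hS (waxp_mono D v σ this hWX)
    · exact waxp_mono D v σ (Finset.subset_insert i S)
  · rintro h ⟨X, ⟨hWX, hmin⟩, hiX⟩
    have hiE : i ∉ X.erase i := Finset.notMem_erase i X
    have : WAXp D v σ (X.erase i) := by
      rw [← h _ hiE, Finset.insert_erase hiX]; exact hWX
    exact hmin _ (Finset.erase_ssubset hiX) this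

lemma coef_pos (i : Fin m) (S : Finset (Fin m)) :
    0 < ((Nat.factorial S.card * Nat.factorial (m - S.card - 1) : ℝ) /
      (Nat.factorial m : ℝ)) := by
  apply div_pos
  · have := Nat.factorial_pos S.card
    have := Nat.factorial_pos (m - S.card - 1)
    positivity
  · exact_mod_cast Nat.factorial_pos m

lemma sv_eq_zero_iff (ν : Finset (Fin m) → ℝ) (i : Fin m)
    (hmono : ∀ S : Finset (Fin m), i ∉ S → ν S ≤ ν (insert i S)) :
    Sv ν i = 0 ↔ ∀ S : Finset (Fin m), i ∉ S → ν (insert i S) = ν S := by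
  have hmem : ∀ S : Finset (Fin m),
      S ∈ (Finset.univ \ ({i} : Finset (Fin m))).powerset ↔ i ∉ S := by
    intro S
    simp only [Finset.mem_powerset, Finset.subset_iff, Finset.mem_sdiff,
      Finset.mem_univ, true_and, Finset.mem_singleton]
    constructor
    · intro h hi; exact h hi rfl
    · intro h j hj hji; exact h (hji ▸ hj)
  have hnn : ∀ S ∈ (Finset.univ \ ({i} : Finset (Fin m))).powerset,
      0 ≤ ((Nat.factorial S.card * Nat.factorial (m - S.card - 1) : ℝ) /
        (Nat.factorial m : ℝ)) * (ν (insert i S) - ν S) := by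
    intro S hS
    exact mul_nonneg (le_of_lt (coef_pos i S))
      (sub_nonneg.2 (hmono S ((hmem S).1 hS)))
  unfold Sv
  rw [Finset.sum_eq_zero_iff_of_nonneg hnn]
  constructor
  · intro h S hiS
    have := h S ((hmem S).2 hiS)
    rcases mul_eq_zero.1 this with hc | hd
    · exact absurd hc (ne_of_gt (coef_pos i S))
    · linarith [sub_eq_zero.1 hd]
  · intro h S hS
    rw [h S ((hmem S).1 hS)]
    ring

lemma sdiff_insert_eq (i : Fin m) (S : Finset (Fin m)) :
    (Finset.univ : Finset (Fin m)) \ insert i S =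
      ((Finset.univ : Finset (Fin m)) \ {i}) \ S := by
  ext j; simp [and_comm]

lemma sdiff_eq_insert (i : Fin m) (S : Finset (Fin m)) (hiS : i ∉ S) :
    (Finset.univ : Finset (Fin m)) \ S =
      insert i (((Finset.univ : Finset (Fin m)) \ {i}) \ S) := by
  ext j
  simp only [Finset.mem_sdiff, Finset.mem_univ, true_and, Finset.mem_insert,
    Finset.mem_singleton]
  constructor
  · intro hj
    by_cases hji : j = i
    · exact Or.inl hji
    · exact Or.inr ⟨hji, hj⟩
  · rintro (rfl | ⟨_, hj⟩)
    · exact hiS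
    · exact hj

theorem stmt9' (hm : 1 ≤ m) (i : Fin m) :
    ((¬ ∃ X : Finset (Fin m),
        (WAXp D v σ X ∧ ∀ Y ⊂ X, ¬ WAXp D v σ Y) ∧ i ∈ X) ↔
      Sv (cf_a D v σ) i = 0) ∧
    ((¬ ∃ X : Finset (Fin m),
        (WAXp D v σ X ∧ ∀ Y ⊂ X, ¬ WAXp D v σ Y) ∧ i ∈ X) ↔
      Sv (cf_c D v σ) i = 0) ∧
    ((¬ ∃ X : Finset (Fin m),
        (WAXp D v σ X ∧ ∀ Y ⊂ X, ¬ WAXp D v σ Y) ∧ i ∈ X) ↔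
      Sv (cf_n D v σ) i = 0) := by
  have hA : (¬ ∃ X : Finset (Fin m),
      (WAXp D v σ X ∧ ∀ Y ⊂ X, ¬ WAXp D v σ Y) ∧ i ∈ X) ↔
      Sv (cf_a D v σ) i = 0 := by
    rw [irrelevant_iff,
      sv_eq_zero_iff (cf_a D v σ) i
        (fun S _ => cf_a_mono D v σ (Finset.subset_insert i S))]
    constructor
    · intro h S hS; exact (cf_a_eq_iff D v σ _ _).2 (h S hS)
    · intro h S hS; exact (cf_a_eq_iff D v σ _ _).1 (h S hS)
  have hCdiff : ∀ S : Finset (Fin m), i ∉ S →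
      cf_c D v σ (insert i S) - cf_c D v σ S =
        cf_a D v σ (insert i (((Finset.univ : Finset (Fin m)) \ {i}) \ S)) -
          cf_a D v σ (((Finset.univ : Finset (Fin m)) \ {i}) \ S) := by
    intro S hS
    rw [cf_c_eq, cf_c_eq, sdiff_insert_eq, sdiff_eq_insert i S hS]
    ring
  have hiT : ∀ S : Finset (Fin m),
      i ∉ ((Finset.univ : Finset (Fin m)) \ {i}) \ S := by
    intro S; simp
  have hN : Sv (cf_n D v σ) i = - Sv (cf_a D v σ) i := by
    have : Sv (cf_n D v σ) i + Sv (cf_a D v σ) i = 0 := by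
      unfold Sv
      rw [← Finset.sum_add_distrib]
      apply Finset.sum_eq_zero
      intro S _
      rw [cf_n_eq, cf_n_eq]
      ring
    linarith
  refine ⟨hA, ?_, ?_⟩
  · rw [hA, sv_eq_zero_iff (cf_c D v σ) i
      (fun S hS => by
        have := hCdiff S hS
        have h2 := cf_a_mono D v σ
          (Finset.subset_insert i (((Finset.univ : Finset (Fin m)) \ {i}) \ S))
        linarith),
      sv_eq_zero_iff (cf_a D v σ) i
        (fun S _ => cf_a_mono D v σ (Finset.subset_insert i S))]
    constructor
    · intro h S hS
      have := hCdiff S hS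
      have h2 := h (((Finset.univ : Finset (Fin m)) \ {i}) \ S) (hiT S)
      linarith
    · intro h T hT
      set S := ((Finset.univ : Finset (Fin m)) \ {i}) \ T with hSdef
      have hiS : i ∉ S := hiT T
      have hTS : ((Finset.univ : Finset (Fin m)) \ {i}) \ S = T := by
        rw [hSdef]
        apply Finset.sdiff_sdiff_eq_self
        intro j hj
        simp only [Finset.mem_sdiff, Finset.mem_univ, true_and,
          Finset.mem_singleton]
        rintro rfl; exact hT hj
      have := hCdiff S hiS
      rw [hTS] at this
      have h2 := h T hT
      linarith [h S hiS]
  · rw [hA, hN, neg_eq_zero]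

end AuxLemmas

theorem stmt9 {m : ℕ} (hm : 1 ≤ m) (D : Fin m → Type) [∀ i, Fintype (D i)]
    [∀ i, Nonempty (D i)] (v : ∀ i, D i) (σ : (∀ i, D i) → Prop)
    (i : Fin m) :
    ((¬ ∃ X : Finset (Fin m),
        (WAXp D v σ X ∧ ∀ Y ⊂ X, ¬ WAXp D v σ Y) ∧ i ∈ X) ↔
      Sv (cf_a D v σ) i = 0) ∧
    ((¬ ∃ X : Finset (Fin m),
        (WAXp D v σ X ∧ ∀ Y ⊂ X, ¬ WAXp D v σ Y) ∧ i ∈ X) ↔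
      Sv (cf_c D v σ) i = 0) ∧
    ((¬ ∃ X : Finset (Fin m),
        (WAXp D v σ X ∧ ∀ Y ⊂ X, ¬ WAXp D v σ Y) ∧ i ∈ X) ↔
      Sv (cf_n D v σ) i = 0) :=
  stmt9' D v σ hm i

end
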